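/- Let I be a composition of n and let h be a central element of the Hecke algebra H(S_I) of the Young subgroup S_I ⊆ S_n. Then the normalized element N_I(h) = Σ_w T_w · h · T_{w⁻¹}, the sum running over the minimal-length coset representatives w of S_n/S_I, is central in the Hecke algebra H_n. -/

import Mathlib

/-!
The elements commuting with `N_I(h)` form a subalgebra and `H_n` is generated by the `T_s`,
`s = s_i`, so it suffices that `T_s` commutes with `N_I(h)`. By the quadratic relation, for every
`w`, `T_s (T_w h T_{w⁻¹}) - (T_w h T_{w⁻¹}) T_s = T_{sw} h T_{w⁻¹} - T_w h T_{(sw)⁻¹}`.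
Summed over the minimal coset representatives `w` (the permutations increasing on every block
of `I`), the terms for which `sw` is again minimal cancel in pairs `w ↔ sw`. If `sw` is not
minimal, Deodhar's lemma gives `sw = wt` for a simple reflection `t ∈ S_I` with both products
length-additive, so the term is `T_w (T_t h - h T_t) T_{w⁻¹} = 0` because `h` commutes with
`H(S_I)`.
-/

open scoped BigOperators
open Finset

namespace HeckePaper

noncomputable section

/-- The Coxeter length of a permutation of `Fin n`, i.e. its number of inversions. -/
def len {n : ℕ} (w : Equiv.Perm (Fin n)) : ℕ :=
  (Finset.univ.filter fun p : Fin n × Fin n => p.1 < p.2 ∧ w p.2 < w p.1).card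

/-- The adjacent transposition exchanging `i` and `i+1` (`0`-based), i.e. the
Coxeter generator `s_{i+1} = T_{i+1}` in the (1-based) notation of the paper;
defined to be `1` when out of range. -/
def adj (n i : ℕ) : Equiv.Perm (Fin n) :=
  if h : i + 1 < n then Equiv.swap ⟨i, by omega⟩ ⟨i + 1, h⟩ else 1

/-- The q-integer `[k] = (q^k - q^{-k})/(q - q⁻¹) = q^{k-1} + q^{k-3} + ⋯ + q^{1-k}`. -/
def qint {R : Type} [CommRing R] (q : Rˣ) (k : ℤ) : R :=
  if 0 ≤ k then ∑ j ∈ Finset.range k.toNat, ((q ^ (k - 1 - 2 * (j : ℤ)) : Rˣ) : R)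
  else - ∑ j ∈ Finset.range (-k).toNat, ((q ^ (-k - 1 - 2 * (j : ℤ)) : Rˣ) : R)

/-- `Q = q - q⁻¹`. -/
def Qv (R : Type) [CommRing R] (q : Rˣ) : R := (q : R) - ((q⁻¹ : Rˣ) : R)

/-- A realization of the Hecke algebra `H_n` of the symmetric group `S_n` over `R`:
an `R`-algebra `H` with a basis `{T_w : w ∈ S_n}` such that `T_u T_v = T_{uv}`
whenever lengths add, and the Hecke quadratic relations
`T_i² = (q - q⁻¹) T_i + 1` hold for the generators. -/
structure HeckeAlgebra (n : ℕ) (R : Type) [CommRing R] (q : Rˣ) (H : Type)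
    [Ring H] [Algebra R H] where
  T : Equiv.Perm (Fin n) → H
  basis : Module.Basis (Equiv.Perm (Fin n)) R H
  basis_eq : ∀ w, basis w = T w
  T_one : T 1 = 1
  T_mul : ∀ u v : Equiv.Perm (Fin n), len (u * v) = len u + len v →
    T u * T v = T (u * v)
  T_sq : ∀ i : ℕ, i + 1 < n →
    T (adj n i) * T (adj n i) = Qv R q • T (adj n i) + 1

/-- The Young subgroup `S_I` of `S_n` associated with a composition `I` of `n`:
permutations preserving each block of the composition. -/
def youngSubgroup {n : ℕ} (c : Composition n) : Subgroup (Equiv.Perm (Fin n)) where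
  carrier := {w | ∀ i, c.index (w i) = c.index i}
  one_mem' := fun _ => rfl
  mul_mem' := by
    intro a b ha hb i
    have hb' := hb i
    have ha' := ha (b i)
    simpa [Equiv.Perm.mul_apply, hb'] using ha'
  inv_mem' := by
    intro a ha i
    have := ha (a⁻¹ i)
    simpa using this.symm

/-- `w` is the minimal-length representative of its coset `w·S_I`. -/
def IsMinCosetRep {n : ℕ} (c : Composition n) (w : Equiv.Perm (Fin n)) : Prop :=
  ∀ u ∈ youngSubgroup c, len w ≤ len (w * u)

/-- `w` is of maximal length in its coset `w·S_I`. -/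
def IsMaxCosetRep {n : ℕ} (c : Composition n) (w : Equiv.Perm (Fin n)) : Prop :=
  ∀ u ∈ youngSubgroup c, len (w * u) ≤ len w

/-- The set of minimal-length representatives of the cosets `S_n/S_I`. -/
def minCosetReps {n : ℕ} (c : Composition n) : Finset (Equiv.Perm (Fin n)) :=
  @Finset.filter _ (IsMinCosetRep c) (Classical.decPred _) Finset.univ

/-- The word `[a+m-2, …, a+1, a]` (so that the corresponding product of adjacent
transpositions is the block cyclic permutation `ζ_m` shifted by `a`). -/
def zetaWordBlock (a m : ℕ) : List ℕ := (List.range (m - 1)).reverse.map (a + ·)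

/-- The reduced word of the permutation `w_J` (whose Hecke element is `ζ_J`),
for a composition `J` of `n`. -/
def zetaWord {n : ℕ} (c : Composition n) : List ℕ :=
  (List.ofFn fun k : Fin c.length =>
    zetaWordBlock (c.sizeUpTo k) (c.blocksFun k)).flatten

/-- The permutation `w_J`, a minimal-length representative of the conjugacy
class corresponding to the composition `J`; `ζ_J = T_{w_J}`. -/
def zetaPerm {n : ℕ} (c : Composition n) : Equiv.Perm (Fin n) :=
  ((zetaWord c).map (adj n)).prod

/-- The composition of `n` obtained by sorting the parts of a partition of `n`
in decreasing order. -/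
def partComp {n : ℕ} (μ : n.Partition) : Composition n where
  blocks := μ.parts.sort (· ≥ ·)
  blocks_pos := by
    intro i hi
    exact μ.parts_pos (by rwa [Multiset.mem_sort] at hi)
  blocks_sum := by
    have h : ((μ.parts.sort (· ≥ ·) : List ℕ) : Multiset ℕ) = μ.parts :=
      Multiset.sort_eq _ _
    calc (μ.parts.sort (· ≥ ·)).sum
        = ((μ.parts.sort (· ≥ ·) : List ℕ) : Multiset ℕ).sum := by
          rw [Multiset.sum_coe]
      _ = μ.parts.sum := by rw [h]
      _ = n := μ.parts_sum

/-- `m` is a partial sum `j_1 + ⋯ + j_k` of the composition `J`. -/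
def IsPartialSum {n : ℕ} (c : Composition n) (m : ℕ) : Prop :=
  ∃ k ≤ c.length, c.sizeUpTo k = m

/-- `w` has a recoil at `a` (0-based; i.e. at `i = a+1` in the 1-based notation of
the paper): the value `a+1` occurs to the left of the value `a` in the one-line
word of `w`. -/
def Recoil {n : ℕ} (w : Equiv.Perm (Fin n)) (a : ℕ) : Prop :=
  ∀ h : a + 1 < n, w⁻¹ ⟨a + 1, h⟩ < w⁻¹ ⟨a, by omega⟩

namespace HeckeAlgebra

variable {n : ℕ} {R : Type} [CommRing R] {q : Rˣ} {H : Type} [Ring H] [Algebra R H]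
variable (𝒜 : HeckeAlgebra n R q H)

/-- The scalar product on `H_n` for which the basis `{T_w}` is orthonormal. -/
def scalar (x y : H) : R :=
  ∑ w : Equiv.Perm (Fin n), 𝒜.basis.repr x w * 𝒜.basis.repr y w

/-- The normalization map `N_I : H(S_I) → H_n`,
`h ↦ Σ_w T_w h T_{w⁻¹}` (sum over the minimal-length coset representatives of
`S_n/S_I`). -/
def norm (c : Composition n) (h : H) : H :=
  ∑ w ∈ minCosetReps c, 𝒜.T w * h * 𝒜.T w⁻¹

/-- The product `T_{a_1} T_{a_2} ⋯` in the Hecke algebra associated with a word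
(list of 0-based indices of the generators). -/
def wordT (l : List ℕ) : H := (l.map fun a => 𝒜.T (adj n a)).prod

/-- The Hecke element `ζ_J = T_{w_J}` of a composition `J`. -/
def zeta (c : Composition n) : H := 𝒜.T (zetaPerm c)

end HeckeAlgebra

open Equiv

section Permutations

variable {n : ℕ}

lemma adj_eq_swap {i : ℕ} (hi : i + 1 < n) : adj n i = swap ⟨i, by omega⟩ ⟨i + 1, hi⟩ :=
  dif_pos hi

@[simp]
lemma adj_mul_self (n i : ℕ) : adj n i * adj n i = 1 := by
  unfold adj; split <;> simp

@[simp]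
lemma adj_inv (n i : ℕ) : (adj n i)⁻¹ = adj n i :=
  inv_eq_of_mul_eq_one_left (adj_mul_self n i)

lemma swap_lt_swap_of_adjacent {a b p q : Fin n} (hab : (a : ℕ) + 1 = b) (hpq : p < q)
    (hne : (p, q) ≠ (a, b)) : swap a b p < swap a b q := by
  simp only [Fin.lt_def, swap_apply_def, ne_eq, Prod.mk.injEq, Fin.ext_iff] at *
  split_ifs <;> omega

def inversions (w : Perm (Fin n)) : Finset (Fin n × Fin n) :=
  univ.filter fun p => p.1 < p.2 ∧ w p.2 < w p.1

lemma len_eq_card_inversions (w : Perm (Fin n)) : len w = #(inversions w) := rfl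

@[simp]
lemma mem_inversions {w : Perm (Fin n)} {p : Fin n × Fin n} :
    p ∈ inversions w ↔ p.1 < p.2 ∧ w p.2 < w p.1 := by
  simp [inversions]

lemma len_inv (w : Perm (Fin n)) : len w⁻¹ = len w :=
  card_nbij' (fun p => (w⁻¹ p.2, w⁻¹ p.1)) (fun p => (w p.2, w p.1))
    (fun p hp => by simp_all) (fun p hp => by simp_all) (fun p _ => by simp) (fun p _ => by simp)

lemma len_mul_adj_of_lt {i : ℕ} (hi : i + 1 < n) {w : Perm (Fin n)}
    (h : w ⟨i, by omega⟩ < w ⟨i + 1, hi⟩) : len (w * adj n i) = len w + 1 := by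
  set a : Fin n := ⟨i, by omega⟩
  set b : Fin n := ⟨i + 1, hi⟩
  have hab : a < b := Fin.mk_lt_mk.2 (by omega)
  rw [adj_eq_swap hi]
  have hswap : ∀ p : Fin n × Fin n, p.1 < p.2 → p ≠ (a, b) →
      swap a b p.1 < swap a b p.2 ∧ (swap a b p.1, swap a b p.2) ≠ (a, b) := by
    rintro ⟨p, q⟩ hpq hne
    refine ⟨swap_lt_swap_of_adjacent rfl hpq hne, ?_⟩
    simp only [ne_eq, Prod.mk.injEq, swap_apply_eq_iff, swap_apply_left, swap_apply_right]
    rintro ⟨rfl, rfl⟩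
    exact hpq.not_gt hab
  have hmem : (a, b) ∈ inversions (w * swap a b) := by simpa [hab] using h
  have hnot : (a, b) ∉ inversions w := by simp [h.le]
  have hcard : #((inversions (w * swap a b)).erase (a, b)) = #((inversions w).erase (a, b)) := by
    refine card_nbij' (fun p => (swap a b p.1, swap a b p.2))
      (fun p => (swap a b p.1, swap a b p.2)) ?_ ?_ (fun p _ => by simp) (fun p _ => by simp)
    · intro p hp
      rw [mem_coe, mem_erase, mem_inversions] at hp ⊢
      exact ⟨(hswap p hp.2.1 hp.1).2, (hswap p hp.2.1 hp.1).1, hp.2.2⟩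
    · intro p hp
      rw [mem_coe, mem_erase, mem_inversions] at hp ⊢
      exact ⟨(hswap p hp.2.1 hp.1).2, (hswap p hp.2.1 hp.1).1, by simpa using hp.2.2⟩
  rw [len_eq_card_inversions, len_eq_card_inversions, ← card_erase_add_one hmem, hcard,
    erase_eq_of_notMem hnot]

lemma len_mul_adj_of_gt {i : ℕ} (hi : i + 1 < n) {w : Perm (Fin n)}
    (h : w ⟨i + 1, hi⟩ < w ⟨i, by omega⟩) : len (w * adj n i) + 1 = len w := by
  have := len_mul_adj_of_lt hi (w := w * adj n i) (by simpa [adj_eq_swap hi] using h)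
  rwa [mul_assoc, adj_mul_self, mul_one, eq_comm] at this

@[simp]
lemma len_one : len (1 : Perm (Fin n)) = 0 := by
  simp only [len_eq_card_inversions, card_eq_zero, eq_empty_iff_forall_notMem, mem_inversions,
    Perm.one_apply]
  exact fun p h => lt_asymm h.1 h.2

lemma len_adj {i : ℕ} (hi : i + 1 < n) : len (adj n i) = 1 := by
  simpa using len_mul_adj_of_lt hi (w := 1) (Fin.mk_lt_mk.2 (by omega))

lemma len_adj_mul_of_lt {i : ℕ} (hi : i + 1 < n) {w : Perm (Fin n)}
    (h : w⁻¹ ⟨i, by omega⟩ < w⁻¹ ⟨i + 1, hi⟩) : len (adj n i * w) = len w + 1 := by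
  rw [← len_inv, mul_inv_rev, adj_inv, len_mul_adj_of_lt hi h, len_inv]

lemma eq_one_of_strictMono {w : Perm (Fin n)} (hw : StrictMono w) : w = 1 :=
  Equiv.ext fun _ => le_antisymm hw.apply_le hw.le_apply

lemma exists_descent_of_lt (w : Perm (Fin n)) {p q : Fin n} (hpq : p < q) (h : w q ≤ w p) :
    ∃ k, ∃ hk : k + 1 < n, (p : ℕ) ≤ k ∧ k + 1 ≤ q ∧ w ⟨k + 1, hk⟩ < w ⟨k, by omega⟩ := by
  obtain ⟨p, hp⟩ := p
  obtain ⟨q, hq⟩ := q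
  induction q with
  | zero => exact absurd hpq (by simp)
  | succ q ih =>
    have hpq : p ≤ q := by simpa [Fin.lt_def, Nat.lt_succ_iff] using hpq
    by_cases hih : p < q ∧ w ⟨q, by omega⟩ ≤ w ⟨p, hp⟩
    · obtain ⟨k, hk, hpk, hkq, hdesc⟩ := ih (by omega) (Fin.mk_lt_mk.2 hih.1) hih.2
      exact ⟨k, hk, hpk, by simp at hkq ⊢; omega, hdesc⟩
    · refine ⟨q, hq, hpq, le_rfl, lt_of_le_of_ne (h.trans ?_) (w.injective.ne (by simp))⟩
      rcases hpq.eq_or_lt with rfl | hlt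
      · exact le_rfl
      · exact (not_le.1 fun hle => hih ⟨hlt, hle⟩).le

lemma exists_descent_of_ne_one {w : Perm (Fin n)} (hw : w ≠ 1) :
    ∃ k, ∃ hk : k + 1 < n, w ⟨k + 1, hk⟩ < w ⟨k, by omega⟩ := by
  obtain ⟨p, q, hpq, h⟩ : ∃ p q, p < q ∧ w q ≤ w p := by
    by_contra! hmono
    exact hw (eq_one_of_strictMono hmono)
  obtain ⟨k, hk, -, -, hdesc⟩ := exists_descent_of_lt w hpq h
  exact ⟨k, hk, hdesc⟩

end Permutations

section YoungSubgroup

variable {n : ℕ} (c : Composition n)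

lemma index_monotone : Monotone c.index := by
  intro x y hxy
  by_contra! h
  have h1 : c.sizeUpTo (c.index y + 1) ≤ c.sizeUpTo (c.index x) := c.monotone_sizeUpTo h
  have h2 : (y : ℕ) < c.sizeUpTo (c.index y + 1) := c.lt_sizeUpTo_index_succ y
  have h3 := c.sizeUpTo_index_le x
  have h4 : (x : ℕ) ≤ y := hxy
  omega

lemma index_eq_of_le_of_le {p k q : Fin n} (hpk : p ≤ k) (hkq : k ≤ q)
    (h : c.index p = c.index q) : c.index k = c.index p :=
  le_antisymm (h ▸ index_monotone c hkq) (index_monotone c hpk)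

lemma swap_mem_youngSubgroup {x y : Fin n} (h : c.index x = c.index y) :
    swap x y ∈ youngSubgroup c := by
  intro z
  rcases eq_or_ne z x with rfl | hzx
  · simpa using h.symm
  rcases eq_or_ne z y with rfl | hzy
  · simpa using h
  · rw [swap_apply_of_ne_of_ne hzx hzy]

lemma adj_mem_youngSubgroup {i : ℕ} (hi : i + 1 < n)
    (h : c.index ⟨i, by omega⟩ = c.index ⟨i + 1, hi⟩) : adj n i ∈ youngSubgroup c := by
  rw [adj_eq_swap hi]
  exact swap_mem_youngSubgroup c h

def BlockIncreasing (w : Perm (Fin n)) : Prop :=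
  ∀ ⦃p q : Fin n⦄, p < q → c.index p = c.index q → w p < w q

variable {c}

lemma IsMinCosetRep.blockIncreasing {w : Perm (Fin n)} (hw : IsMinCosetRep c w) :
    BlockIncreasing c w := by
  intro p q hpq hidx
  by_contra! h
  obtain ⟨k, hk, hpk, hkq, hdesc⟩ := exists_descent_of_lt w hpq h
  have hk₀ : c.index ⟨k, by omega⟩ = c.index p :=
    index_eq_of_le_of_le c (Fin.le_def.2 hpk) (Fin.le_def.2 (by simp only; omega)) hidx
  have hk₁ : c.index ⟨k + 1, hk⟩ = c.index p :=
    index_eq_of_le_of_le c (Fin.le_def.2 (by simp only; omega)) (Fin.le_def.2 hkq) hidx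
  have hmem := adj_mem_youngSubgroup c hk (hk₀.trans hk₁.symm)
  have := hw _ hmem
  have := len_mul_adj_of_gt hk hdesc
  omega

lemma BlockIncreasing.isMinCosetRep {w : Perm (Fin n)} (hw : BlockIncreasing c w) :
    IsMinCosetRep c w := by
  intro u hu
  rw [len_eq_card_inversions, len_eq_card_inversions]
  have hu' : ∀ x, c.index (u⁻¹ x) = c.index x := (youngSubgroup c).inv_mem hu
  -- an inversion of `w` joins two different blocks, which `u⁻¹` preserves
  refine card_le_card_of_injOn (fun p => (u⁻¹ p.1, u⁻¹ p.2)) (fun p hp => ?_)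
    (fun p _ p' _ h => ?_)
  · rw [mem_coe, mem_inversions] at hp ⊢
    have hidx : c.index p.1 < c.index p.2 :=
      (index_monotone c hp.1.le).lt_of_ne fun h => (hw hp.1 h).not_gt hp.2
    refine ⟨(index_monotone c).reflect_lt (by rwa [hu', hu']), ?_⟩
    simpa using hp.2
  · simp only [Prod.mk.injEq, EmbeddingLike.apply_eq_iff_eq] at h
    exact Prod.ext h.1 h.2

lemma isMinCosetRep_iff_blockIncreasing {w : Perm (Fin n)} :
    IsMinCosetRep c w ↔ BlockIncreasing c w :=
  ⟨IsMinCosetRep.blockIncreasing, BlockIncreasing.isMinCosetRep⟩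

lemma mem_minCosetReps {w : Perm (Fin n)} : w ∈ minCosetReps c ↔ BlockIncreasing c w := by
  classical
  simp [minCosetReps, isMinCosetRep_iff_blockIncreasing]

/-- Deodhar's lemma. -/
lemma exists_adj_of_not_blockIncreasing_adj_mul {i : ℕ} (hi : i + 1 < n) {w : Perm (Fin n)}
    (hw : BlockIncreasing c w) (hsw : ¬ BlockIncreasing c (adj n i * w)) :
    ∃ j, ∃ hj : j + 1 < n, c.index ⟨j, by omega⟩ = c.index ⟨j + 1, hj⟩ ∧
      w ⟨j, by omega⟩ = ⟨i, by omega⟩ ∧ w ⟨j + 1, hj⟩ = ⟨i + 1, hi⟩ := by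
  obtain ⟨p, q, hpq, hidx, hle⟩ :
      ∃ p q, p < q ∧ c.index p = c.index q ∧ (adj n i * w) q ≤ (adj n i * w) p := by
    simpa [BlockIncreasing] using hsw
  obtain ⟨hp, hq⟩ : w p = ⟨i, by omega⟩ ∧ w q = ⟨i + 1, hi⟩ := by
    by_contra hne
    rw [adj_eq_swap hi] at hle
    exact hle.not_gt (swap_lt_swap_of_adjacent rfl (hw hpq hidx)
      (by simpa only [ne_eq, Prod.mk.injEq] using hne))
  obtain ⟨p, hpn⟩ := p
  have hpq' : p < q := hpq
  have hp₁ : p + 1 < n := by have := q.isLt; omega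
  -- the value of `w` at `p + 1 < q` would lie strictly between `i` and `i + 1`
  obtain rfl : q = ⟨p + 1, hp₁⟩ := by
    by_contra hne
    have hpr : (⟨p, hpn⟩ : Fin n) < ⟨p + 1, hp₁⟩ := Fin.mk_lt_mk.2 (by omega)
    have hrq : (⟨p + 1, hp₁⟩ : Fin n) < q := by
      rw [Fin.lt_def]; rw [Fin.ext_iff] at hne; simp only at hne ⊢; omega
    have hidx' := index_eq_of_le_of_le c hpr.le hrq.le hidx
    have h1 := hw hpr hidx'.symm
    have h2 := hw hrq (hidx'.trans hidx)
    rw [hp, Fin.lt_def] at h1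
    rw [hq, Fin.lt_def] at h2
    simp only at h1 h2
    omega
  exact ⟨p, hp₁, hidx, hp, hq⟩

end YoungSubgroup

namespace HeckeAlgebra

variable {n : ℕ} {R : Type} [CommRing R] {q : Rˣ} {H : Type} [Ring H] [Algebra R H]
variable (𝒜 : HeckeAlgebra n R q H)

lemma T_mul_T_adj_of_lt {i : ℕ} (hi : i + 1 < n) {w : Perm (Fin n)}
    (h : w ⟨i, by omega⟩ < w ⟨i + 1, hi⟩) : 𝒜.T w * 𝒜.T (adj n i) = 𝒜.T (w * adj n i) :=
  𝒜.T_mul _ _ (by rw [len_mul_adj_of_lt hi h, len_adj hi])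

lemma T_adj_mul_T_of_lt {i : ℕ} (hi : i + 1 < n) {w : Perm (Fin n)}
    (h : w⁻¹ ⟨i, by omega⟩ < w⁻¹ ⟨i + 1, hi⟩) : 𝒜.T (adj n i) * 𝒜.T w = 𝒜.T (adj n i * w) :=
  𝒜.T_mul _ _ (by rw [len_adj_mul_of_lt hi h, len_adj hi, add_comm])

lemma T_mul_T_adj_of_gt {i : ℕ} (hi : i + 1 < n) {w : Perm (Fin n)}
    (h : w ⟨i + 1, hi⟩ < w ⟨i, by omega⟩) :
    𝒜.T w * 𝒜.T (adj n i) = Qv R q • 𝒜.T w + 𝒜.T (w * adj n i) := by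
  have hw : 𝒜.T (w * adj n i) * 𝒜.T (adj n i) = 𝒜.T w := by
    rw [T_mul_T_adj_of_lt 𝒜 hi (by simpa [adj_eq_swap hi] using h), mul_assoc, adj_mul_self,
      mul_one]
  rw [← hw, mul_assoc, 𝒜.T_sq i hi, mul_add, mul_smul_comm, mul_one, hw]

lemma T_adj_mul_T_of_gt {i : ℕ} (hi : i + 1 < n) {w : Perm (Fin n)}
    (h : w⁻¹ ⟨i + 1, hi⟩ < w⁻¹ ⟨i, by omega⟩) :
    𝒜.T (adj n i) * 𝒜.T w = Qv R q • 𝒜.T w + 𝒜.T (adj n i * w) := by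
  have hw : 𝒜.T (adj n i) * 𝒜.T (adj n i * w) = 𝒜.T w := by
    rw [T_adj_mul_T_of_lt 𝒜 hi (by simpa [adj_eq_swap hi] using h), ← mul_assoc, adj_mul_self,
      one_mul]
  rw [← hw, ← mul_assoc, 𝒜.T_sq i hi, add_mul, smul_mul_assoc, one_mul, hw]

lemma T_adj_mul_conj_sub_conj_mul_T_adj {i : ℕ} (hi : i + 1 < n) (h : H) (w : Perm (Fin n)) :
    𝒜.T (adj n i) * (𝒜.T w * h * 𝒜.T w⁻¹) - 𝒜.T w * h * 𝒜.T w⁻¹ * 𝒜.T (adj n i) =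
      𝒜.T (adj n i * w) * h * 𝒜.T w⁻¹ - 𝒜.T w * h * 𝒜.T (adj n i * w)⁻¹ := by
  obtain ⟨r, hl, hr⟩ : ∃ r : R, 𝒜.T (adj n i) * 𝒜.T w = r • 𝒜.T w + 𝒜.T (adj n i * w) ∧
      𝒜.T w⁻¹ * 𝒜.T (adj n i) = r • 𝒜.T w⁻¹ + 𝒜.T (adj n i * w)⁻¹ := by
    rw [mul_inv_rev, adj_inv]
    have hne : (⟨i, by omega⟩ : Fin n) ≠ ⟨i + 1, hi⟩ := by simp
    rcases lt_or_gt_of_ne (w⁻¹.injective.ne hne) with hlt | hgt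
    · exact ⟨0, by simp [T_adj_mul_T_of_lt 𝒜 hi hlt],
        by simp [T_mul_T_adj_of_lt 𝒜 hi (w := w⁻¹) hlt]⟩
    · exact ⟨Qv R q, T_adj_mul_T_of_gt 𝒜 hi hgt, T_mul_T_adj_of_gt 𝒜 hi hgt⟩
  calc _ = (𝒜.T (adj n i) * 𝒜.T w) * h * 𝒜.T w⁻¹ - 𝒜.T w * h * (𝒜.T w⁻¹ * 𝒜.T (adj n i)) := by
        simp only [mul_assoc]
    _ = _ := by
        rw [hl, hr]
        simp only [add_mul, mul_add, smul_mul_assoc, mul_smul_comm]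
        abel

lemma T_adj_mul_conj_sub_eq_zero_of_notMem {c : Composition n} {h : H}
    (hcent : ∀ u ∈ youngSubgroup c, h * 𝒜.T u = 𝒜.T u * h) {i : ℕ} (hi : i + 1 < n)
    {w : Perm (Fin n)} (hw : w ∈ minCosetReps c) (hsw : adj n i * w ∉ minCosetReps c) :
    𝒜.T (adj n i * w) * h * 𝒜.T w⁻¹ - 𝒜.T w * h * 𝒜.T (adj n i * w)⁻¹ = 0 := by
  rw [mem_minCosetReps] at hw hsw
  obtain ⟨j, hj, hidx, hwj, hwj₁⟩ := exists_adj_of_not_blockIncreasing_adj_mul hi hw hsw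
  have hcomm : adj n i * w = w * adj n j := by
    rw [adj_eq_swap hi, adj_eq_swap hj, mul_swap_eq_swap_mul, hwj, hwj₁]
  have hlt : w ⟨j, by omega⟩ < w ⟨j + 1, hj⟩ := by
    rw [hwj, hwj₁]
    exact Fin.mk_lt_mk.2 (Nat.lt_succ_self i)
  have hl : 𝒜.T (adj n i * w) = 𝒜.T w * 𝒜.T (adj n j) := by
    rw [hcomm, T_mul_T_adj_of_lt 𝒜 hj hlt]
  have hr : 𝒜.T (adj n i * w)⁻¹ = 𝒜.T (adj n j) * 𝒜.T w⁻¹ := by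
    rw [hcomm, mul_inv_rev, adj_inv, T_adj_mul_T_of_lt 𝒜 hj (by simpa using hlt)]
  rw [hl, hr, mul_assoc (𝒜.T w), ← hcent _ (adj_mem_youngSubgroup c hj hidx)]
  simp only [mul_assoc, sub_self]

lemma commute_T_adj_norm {c : Composition n} {h : H}
    (hcent : ∀ u ∈ youngSubgroup c, h * 𝒜.T u = 𝒜.T u * h) {i : ℕ} (hi : i + 1 < n) :
    Commute (𝒜.T (adj n i)) (𝒜.norm c h) := by
  set s := adj n i
  set g : Perm (Fin n) → H := fun w => 𝒜.T (s * w) * h * 𝒜.T w⁻¹ - 𝒜.T w * h * 𝒜.T (s * w)⁻¹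
  have hss : ∀ w, s * (s * w) = w := fun w => by rw [← mul_assoc, adj_mul_self, one_mul]
  have hpairs : ∑ w ∈ (minCosetReps c).filter (s * · ∈ minCosetReps c), g w = 0 := by
    refine sum_involution (fun w _ => s * w) (fun w _ => ?_) (fun w _ hne heq => ?_)
      (fun w hw => ?_) (fun w _ => hss w)
    · simp only [g, hss]
      abel
    · exact hne (by simp only [g, heq, sub_self])
    · rw [mem_filter] at hw ⊢
      exact ⟨hw.2, by rw [hss]; exact hw.1⟩
  have hsingles : ∑ w ∈ (minCosetReps c).filter (s * · ∉ minCosetReps c), g w = 0 :=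
    sum_eq_zero fun w hw =>
      T_adj_mul_conj_sub_eq_zero_of_notMem 𝒜 hcent hi (mem_filter.1 hw).1 (mem_filter.1 hw).2
  rw [Commute, SemiconjBy, ← sub_eq_zero]
  calc _ = ∑ w ∈ minCosetReps c, g w := by
        rw [norm, mul_sum, sum_mul, ← sum_sub_distrib]
        exact sum_congr rfl fun w _ => T_adj_mul_conj_sub_conj_mul_T_adj 𝒜 hi h w
    _ = 0 := by rw [← sum_filter_add_sum_filter_not _ (s * · ∈ minCosetReps c), hpairs,
        hsingles, add_zero]

lemma commute_T_of_commute_T_adj {z : H}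
    (hz : ∀ i, i + 1 < n → Commute z (𝒜.T (adj n i))) (w : Perm (Fin n)) :
    Commute z (𝒜.T w) := by
  induction hlen : len w using Nat.strong_induction_on generalizing w with
  | _ m ih =>
    rcases eq_or_ne w 1 with rfl | hw
    · rw [𝒜.T_one]
      exact Commute.one_right z
    obtain ⟨k, hk, hdesc⟩ := exists_descent_of_ne_one hw
    have hT : 𝒜.T (w * adj n k) * 𝒜.T (adj n k) = 𝒜.T w := by
      rw [T_mul_T_adj_of_lt 𝒜 hk (by simpa [adj_eq_swap hk] using hdesc), mul_assoc,
        adj_mul_self, mul_one]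
    have := len_mul_adj_of_gt hk hdesc
    rw [← hT]
    exact (ih _ (by omega) _ rfl).mul_right (hz k hk)

lemma commute_of_commute_T_adj {z : H}
    (hz : ∀ i, i + 1 < n → Commute z (𝒜.T (adj n i))) (x : H) : Commute z x := by
  rw [← 𝒜.basis.sum_equivFun x]
  exact Commute.sum_right _ _ _ fun w _ =>
    (𝒜.basis_eq w ▸ 𝒜.commute_T_of_commute_T_adj hz w).smul_right _

end HeckeAlgebra

theorem norm_central_general {n : ℕ} {R : Type} [CommRing R] {q : Rˣ} {H : Type}
    [Ring H] [Algebra R H] (𝒜 : HeckeAlgebra n R q H) (c : Composition n) (h : H)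
    (hcent : ∀ u ∈ youngSubgroup c, h * 𝒜.T u = 𝒜.T u * h) :
    ∀ x : H, 𝒜.norm c h * x = x * 𝒜.norm c h :=
  𝒜.commute_of_commute_T_adj fun _ hi => (𝒜.commute_T_adj_norm hcent hi).symm

/-- If `h` is a central element of the Hecke algebra `H(S_I)` of the
Young subgroup `S_I`, then the normalized element
`N_I(h) = Σ_w T_w · h · T_{w⁻¹}` (sum over the minimal-length coset
representatives of `S_n/S_I`) is central in `H_n`. -/
theorem norm_central {n : ℕ} {R : Type} [CommRing R] {q : Rˣ} {H : Type}
    [Ring H] [Algebra R H] (𝒜 : HeckeAlgebra n R q H) (c : Composition n) (h : H)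
    (hmem : h ∈ Submodule.span R (𝒜.T '' (youngSubgroup c : Set (Equiv.Perm (Fin n)))))
    (hcent : ∀ u ∈ youngSubgroup c, h * 𝒜.T u = 𝒜.T u * h) :
    ∀ x : H, 𝒜.norm c h * x = x * 𝒜.norm c h :=
  norm_central_general 𝒜 c h hcent
end
end HeckePaper
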